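/- arXiv:math/0604353 — 3 statements merged into one kernel-verified Lean document; each statement's English description precedes it below -/
import Mathlib

section
/- If f : F_2^n → {-1,1} is a boolean function with ‖f‖_{U3} ≥ ε, then there exist constants δ, δ' > 0 depending only on ε and a choice function φ : F_2^n → F_2^n such that Pr_y(|f̂_y(φ(y))| ≥ δ) ≥ δ'. In particular one may take δ = δ' determined by ε^8/2 ≤ E_y max_α f̂_y(α)^2. -/
open Finset

/-- The character `(-1)^{⟨α,x⟩}` on `F_2^n`. -/
noncomputable def chi {n : ℕ} (α x : Fin n → ZMod 2) : ℝ :=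
  (-1 : ℝ) ^ ((∑ i, α i * x i : ZMod 2)).val

/-- Fourier coefficient `f̂(α) = E_x f(x)(-1)^{⟨α,x⟩}`. -/
noncomputable def fCoeff {n : ℕ} (f : (Fin n → ZMod 2) → ℝ) (α : Fin n → ZMod 2) : ℝ :=
  (∑ x, f x * chi α x) / 2 ^ n

/-- Discrete derivative `f_y(x) = f(x) f(x+y)`. -/
noncomputable def dderiv {n : ℕ} (f : (Fin n → ZMod 2) → ℝ) (y : Fin n → ZMod 2) :
    (Fin n → ZMod 2) → ℝ := fun x => f x * f (x + y)

/-- `‖f‖_{U_d}^{2^d} = E_{x,y_1,…,y_d} ∏_{S ⊆ [d]} f(x + Σ_{i∈S} y_i)`. -/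
noncomputable def gowersPow {n : ℕ} (d : ℕ) (f : (Fin n → ZMod 2) → ℝ) : ℝ :=
  (∑ x : Fin n → ZMod 2, ∑ y : Fin d → Fin n → ZMod 2,
      ∏ S : Finset (Fin d), f (x + ∑ i ∈ S, y i)) / ((2 : ℝ) ^ n) ^ (d + 1)

/-- The Gowers uniformity norm `‖f‖_{U_d}`. -/
noncomputable def gowersNorm {n : ℕ} (d : ℕ) (f : (Fin n → ZMod 2) → ℝ) : ℝ :=
  gowersPow d f ^ ((1 : ℝ) / 2 ^ d)

section Aux

variable {n : ℕ}

lemma my_neg_one_pow_val_add (a b : ZMod 2) :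
    (-1 : ℝ) ^ ((a + b).val) = (-1 : ℝ) ^ a.val * (-1 : ℝ) ^ b.val := by
  have h : a = 0 ∨ a = 1 := by revert a; decide
  have h' : b = 0 ∨ b = 1 := by revert b; decide
  rcases h with h | h <;> rcases h' with h' | h' <;> subst h <;> subst h' <;>
    norm_num [show ZMod.val (0 : ZMod 2) = 0 from rfl,
      show ZMod.val (1 : ZMod 2) = 1 from rfl,
      show ZMod.val (2 : ZMod 2) = 0 by decide]

lemma my_chi_add_right (α x y : Fin n → ZMod 2) : chi α (x + y) = chi α x * chi α y := by
  unfold chi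
  rw [show (∑ i, α i * (x + y) i) = (∑ i, α i * x i) + (∑ i, α i * y i) by
    rw [← Finset.sum_add_distrib]; exact Finset.sum_congr rfl fun i _ => by
      simp [mul_add]]
  exact my_neg_one_pow_val_add _ _

lemma my_chi_comm (α x : Fin n → ZMod 2) : chi α x = chi x α := by
  unfold chi; congr 2; exact Finset.sum_congr rfl fun i _ => mul_comm _ _

lemma my_chi_zero (x : Fin n → ZMod 2) : chi 0 x = 1 := by
  unfold chi; simp

lemma my_sum_chi (α : Fin n → ZMod 2) :
    ∑ x, chi α x = if α = 0 then (2 : ℝ) ^ n else 0 := by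
  split_ifs with h
  · subst h; simp [my_chi_zero]
  · have hex : ∃ i, α i ≠ 0 := by
      by_contra hc; push_neg at hc; exact h (funext fun i => hc i)
    obtain ⟨i, hi⟩ := hex
    have hai : α i = 1 := by revert hi; generalize α i = a; revert a; decide
    set δ : Fin n → ZMod 2 := Pi.single i 1 with hδ
    have hchi : chi α δ = -1 := by
      show (-1 : ℝ) ^ ((∑ j, α j * δ j : ZMod 2)).val = -1
      have hs : (∑ j, α j * δ j) = α i := by
        rw [Finset.sum_eq_single i]
        · simp [hδ]
        · intro j _ hj; simp [hδ, Pi.single_eq_of_ne hj]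
        · simp
      rw [hs, hai]
      norm_num [show ZMod.val (1 : ZMod 2) = 1 from rfl]
    have key : ∑ x, chi α (x + δ) = ∑ x, chi α x :=
      Fintype.sum_equiv (Equiv.addRight δ) _ _ (fun x => rfl)
    have key2 : ∀ x : Fin n → ZMod 2, chi α (x + δ) = - chi α x := fun x => by
      rw [my_chi_add_right, hchi, mul_neg_one]
    simp only [key2, Finset.sum_neg_distrib] at key
    linarith [key]

lemma my_sum_chi' (w : Fin n → ZMod 2) :
    ∑ α, chi α w = if w = 0 then (2 : ℝ) ^ n else 0 := by
  simp only [my_chi_comm _ w]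
  exact my_sum_chi w

lemma my_v_neg (v : Fin n → ZMod 2) : -v = v := by
  funext i
  show - (v i) = v i
  generalize v i = a; revert a; decide

lemma my_char2_cond (a b : Fin n → ZMod 2) : (a + b = 0) = (b = a) := by
  rw [add_eq_zero_iff_eq_neg, my_v_neg]
  exact propext ⟨fun h => h.symm, fun h => h.symm⟩

lemma my_parseval (g : (Fin n → ZMod 2) → ℝ) :
    ∑ α, (fCoeff g α) ^ 2 = (∑ x, g x ^ 2) / 2 ^ n := by
  have expand : ∀ α, (fCoeff g α) ^ 2
      = (∑ a, ∑ b, g a * g b * chi α (a + b)) / ((2 : ℝ) ^ n) ^ 2 := by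
    intro α
    rw [fCoeff, div_pow, sq, Finset.sum_mul_sum]
    congr 1
    exact Finset.sum_congr rfl fun a _ => Finset.sum_congr rfl fun b _ => by
      rw [my_chi_add_right]; ring
  simp only [expand]
  rw [← Finset.sum_div, Finset.sum_comm]
  have step : ∀ a : Fin n → ZMod 2,
      ∑ α, ∑ b, g a * g b * chi α (a + b) = g a ^ 2 * 2 ^ n := by
    intro a
    rw [Finset.sum_comm]
    have inner : ∀ b, ∑ α, g a * g b * chi α (a + b)
        = g a * g b * if b = a then (2 : ℝ) ^ n else 0 := by
      intro b
      rw [← Finset.mul_sum, my_sum_chi']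
      simp only [my_char2_cond]
    simp only [inner, mul_ite, mul_zero]
    rw [Finset.sum_ite_eq' (Finset.univ) a (fun b => g a * g b * 2 ^ n)]
    simp [sq]
  simp only [step]
  rw [← Finset.sum_mul]
  have h2 : ((2 : ℝ) ^ n) ≠ 0 := by positivity
  field_simp

/-- auxiliary quadruple correlation sum -/
noncomputable def myT {n : ℕ} (g : (Fin n → ZMod 2) → ℝ) : ℝ :=
  ∑ x, ∑ u, ∑ v, g x * g (x + u) * g (x + v) * g (x + u + v)

lemma my_sum_quartic (g : (Fin n → ZMod 2) → ℝ) :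
    ∑ α, (fCoeff g α) ^ 4
      = (∑ a, ∑ b, ∑ c, g a * g b * g c * g (a + b + c)) / ((2 : ℝ) ^ n) ^ 3 := by
  have expand : ∀ α, (fCoeff g α) ^ 4
      = (∑ a, ∑ b, ∑ c, ∑ d, g a * g b * g c * g d * chi α (a + b + c + d))
          / ((2 : ℝ) ^ n) ^ 4 := by
    intro α
    rw [fCoeff, div_pow]
    congr 1
    rw [pow_succ, pow_succ, pow_succ, pow_one]
    simp only [Finset.sum_mul, Finset.mul_sum]
    refine Finset.sum_congr rfl fun a _ => Finset.sum_congr rfl fun b _ =>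
      Finset.sum_congr rfl fun c _ => Finset.sum_congr rfl fun d _ => ?_
    rw [my_chi_add_right, my_chi_add_right, my_chi_add_right]
    ring
  simp only [expand]
  rw [← Finset.sum_div]
  have swap : ∑ α, ∑ a, ∑ b, ∑ c, ∑ d,
        g a * g b * g c * g d * chi α (a + b + c + d)
      = ∑ a, ∑ b, ∑ c, ∑ d, ∑ α : Fin n → ZMod 2,
        g a * g b * g c * g d * chi α (a + b + c + d) := by
    rw [Finset.sum_comm]
    refine Finset.sum_congr rfl fun a _ => ?_
    rw [Finset.sum_comm]
    refine Finset.sum_congr rfl fun b _ => ?_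
    rw [Finset.sum_comm]
    refine Finset.sum_congr rfl fun c _ => ?_
    rw [Finset.sum_comm]
  rw [swap]
  have inner : ∀ a b c : Fin n → ZMod 2,
      ∑ d, ∑ α : Fin n → ZMod 2, g a * g b * g c * g d * chi α (a + b + c + d)
        = g a * g b * g c * g (a + b + c) * 2 ^ n := by
    intro a b c
    have h1 : ∀ d, ∑ α : Fin n → ZMod 2, g a * g b * g c * g d * chi α (a + b + c + d)
        = g a * g b * g c * g d * if d = a + b + c then (2 : ℝ) ^ n else 0 := by
      intro d
      rw [← Finset.mul_sum, my_sum_chi']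
      simp only [my_char2_cond]
    simp only [h1, mul_ite, mul_zero]
    rw [Finset.sum_ite_eq' Finset.univ (a + b + c)
      (fun d => g a * g b * g c * g d * 2 ^ n)]
    simp
  simp only [inner]
  rw [show (∑ a, ∑ b, ∑ c, g a * g b * g c * g (a + b + c) * (2 : ℝ) ^ n)
      = (∑ a, ∑ b, ∑ c, g a * g b * g c * g (a + b + c)) * 2 ^ n by
    simp only [← Finset.sum_mul]]
  have h2 : ((2 : ℝ) ^ n) ≠ 0 := by positivity
  field_simp

lemma my_quartic_T (g : (Fin n → ZMod 2) → ℝ) :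
    (∑ a, ∑ b, ∑ c, g a * g b * g c * g (a + b + c)) = myT g := by
  unfold myT
  refine Finset.sum_congr rfl fun a _ => ?_
  have harg : ∀ u v : Fin n → ZMod 2, a + (a + u) + (a + v) = a + u + v := by
    intro u v
    funext i
    show a i + (a i + u i) + (a i + v i) = a i + u i + v i
    generalize a i = x; generalize u i = y; generalize v i = z
    revert x y z; decide
  calc ∑ b, ∑ c, g a * g b * g c * g (a + b + c)
      = ∑ u, ∑ c, g a * g (a + u) * g c * g (a + (a + u) + c) :=
        (Fintype.sum_equiv (Equiv.addLeft a)
          (fun u => ∑ c, g a * g (a + u) * g c * g (a + (a + u) + c))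
          (fun b => ∑ c, g a * g b * g c * g (a + b + c)) (fun u => rfl)).symm
    _ = ∑ u, ∑ v, g a * g (a + u) * g (a + v) * g (a + (a + u) + (a + v)) :=
        Finset.sum_congr rfl fun u _ =>
          (Fintype.sum_equiv (Equiv.addLeft a)
            (fun v => g a * g (a + u) * g (a + v) * g (a + (a + u) + (a + v)))
            (fun c => g a * g (a + u) * g c * g (a + (a + u) + c)) (fun v => rfl)).symm
    _ = ∑ u, ∑ v, g a * g (a + u) * g (a + v) * g (a + u + v) := by
        simp only [harg]

lemma my_prod_fin2 (h : Finset (Fin 2) → ℝ) : ∏ S : Finset (Fin 2), h S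
    = h ∅ * h {0} * h {1} * h {0, 1} := by
  rw [show (univ : Finset (Finset (Fin 2))) = {∅, {0}, {1}, {0, 1}} from by decide]
  rw [Finset.prod_insert (by decide), Finset.prod_insert (by decide),
    Finset.prod_insert (by decide), Finset.prod_singleton]
  ring

lemma my_prod_fin3 (h : Finset (Fin 3) → ℝ) : ∏ S : Finset (Fin 3), h S
    = h ∅ * h {0} * h {1} * h {2} * h {0, 1} * h {0, 2} * h {1, 2} * h {0, 1, 2} := by
  rw [show (univ : Finset (Finset (Fin 3)))
      = {∅, {0}, {1}, {2}, {0, 1}, {0, 2}, {1, 2}, {0, 1, 2}} from by decide]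
  rw [Finset.prod_insert (by decide), Finset.prod_insert (by decide),
    Finset.prod_insert (by decide), Finset.prod_insert (by decide),
    Finset.prod_insert (by decide), Finset.prod_insert (by decide),
    Finset.prod_insert (by decide), Finset.prod_singleton]
  ring

lemma my_sum_fin2 (h : (Fin 2 → Fin n → ZMod 2) → ℝ) :
    ∑ y : Fin 2 → Fin n → ZMod 2, h y = ∑ u, ∑ v, h ![u, v] := by
  calc ∑ y : Fin 2 → Fin n → ZMod 2, h y = ∑ p : (Fin n → ZMod 2) × (Fin n → ZMod 2), h ![p.1, p.2] :=
        Fintype.sum_equiv (piFinTwoEquiv (fun _ => Fin n → ZMod 2)) _ _ (fun y => by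
          congr 1; exact funext fun i => by fin_cases i <;> rfl)
    _ = ∑ u, ∑ v, h ![u, v] := by rw [Fintype.sum_prod_type]

lemma my_sum_fin3 (h : (Fin 3 → Fin n → ZMod 2) → ℝ) :
    ∑ y : Fin 3 → Fin n → ZMod 2, h y = ∑ u, ∑ v, ∑ w, h ![u, v, w] := by
  calc ∑ y : Fin 3 → Fin n → ZMod 2, h y
      = ∑ p : (Fin n → ZMod 2) × (Fin n → ZMod 2) × (Fin n → ZMod 2), h ![p.1, p.2.1, p.2.2] :=
        Fintype.sum_equiv ((Fin.consEquiv (fun _ => Fin n → ZMod 2)).symm.trans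
          ((Equiv.refl _).prodCongr (piFinTwoEquiv (fun _ => Fin n → ZMod 2)))) _ _ (fun y => by
          congr 1; exact funext fun i => by fin_cases i <;> rfl)
    _ = ∑ u, ∑ v, ∑ w, h ![u, v, w] := by
        rw [Fintype.sum_prod_type]
        exact Finset.sum_congr rfl fun u _ => by rw [Fintype.sum_prod_type]

lemma my_gowers2 (g : (Fin n → ZMod 2) → ℝ) :
    gowersPow 2 g = myT g / ((2 : ℝ) ^ n) ^ 3 := by
  unfold gowersPow myT
  congr 1
  refine Finset.sum_congr rfl fun x _ => ?_
  rw [my_sum_fin2]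
  refine Finset.sum_congr rfl fun u _ => Finset.sum_congr rfl fun v _ => ?_
  rw [my_prod_fin2]
  simp [Finset.sum_insert, add_assoc, add_comm, add_left_comm]

lemma my_sum_rotate (G : (Fin n → ZMod 2) → (Fin n → ZMod 2) → (Fin n → ZMod 2) → (Fin n → ZMod 2) → ℝ) :
    ∑ x, ∑ u, ∑ v, ∑ c, G x u v c = ∑ c, ∑ x, ∑ u, ∑ v, G x u v c :=
  calc ∑ x, ∑ u, ∑ v, ∑ c, G x u v c
      = ∑ x, ∑ u, ∑ c, ∑ v, G x u v c :=
        Finset.sum_congr rfl fun _ _ => Finset.sum_congr rfl fun _ _ => Finset.sum_comm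
    _ = ∑ x, ∑ c, ∑ u, ∑ v, G x u v c :=
        Finset.sum_congr rfl fun _ _ => Finset.sum_comm
    _ = ∑ c, ∑ x, ∑ u, ∑ v, G x u v c := Finset.sum_comm

lemma my_gowers3 (f : (Fin n → ZMod 2) → ℝ) :
    gowersPow 3 f = (∑ c, gowersPow 2 (dderiv f c)) / 2 ^ n := by
  have hrhs : (∑ c, gowersPow 2 (dderiv f c)) / (2 : ℝ) ^ n
      = (∑ c, myT (dderiv f c)) / ((2 : ℝ) ^ n) ^ 4 := by
    simp only [my_gowers2]
    rw [← Finset.sum_div, div_div, ← pow_succ]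
  rw [hrhs]
  unfold gowersPow
  congr 1
  have key : ∀ x u v c : Fin n → ZMod 2,
      (∏ S : Finset (Fin 3), f (x + ∑ i ∈ S, (![u, v, c] : Fin 3 → Fin n → ZMod 2) i))
        = dderiv f c x * dderiv f c (x + u) * dderiv f c (x + v) * dderiv f c (x + u + v) := by
    intro x u v c
    rw [my_prod_fin3]
    simp only [dderiv]
    simp [Finset.sum_insert, add_assoc, add_comm, add_left_comm,
      mul_assoc, mul_comm, mul_left_comm]
  calc ∑ x, ∑ y : Fin 3 → Fin n → ZMod 2, ∏ S : Finset (Fin 3), f (x + ∑ i ∈ S, y i)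
      = ∑ x, ∑ u, ∑ v, ∑ c, dderiv f c x * dderiv f c (x + u) * dderiv f c (x + v)
          * dderiv f c (x + u + v) := by
        refine Finset.sum_congr rfl fun x _ => ?_
        rw [my_sum_fin3]
        exact Finset.sum_congr rfl fun u _ => Finset.sum_congr rfl fun v _ =>
          Finset.sum_congr rfl fun c _ => key x u v c
    _ = ∑ c, ∑ x, ∑ u, ∑ v, dderiv f c x * dderiv f c (x + u) * dderiv f c (x + v)
          * dderiv f c (x + u + v) := my_sum_rotate _
    _ = ∑ c, myT (dderiv f c) := rfl

lemma my_u2_eq (g : (Fin n → ZMod 2) → ℝ) :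
    gowersPow 2 g = ∑ α, (fCoeff g α) ^ 4 := by
  rw [my_gowers2, my_sum_quartic, my_quartic_T]

end Aux

open scoped Classical in
/-- If a boolean `f` has `‖f‖_{U3} ≥ ε`, then there are `δ, δ' > 0` depending only on `ε`
(one may take `δ = δ'` with `δ² = ε^8/2`) and a choice function `φ` such that
`Pr_y(|f̂_y(φ(y))| ≥ δ) ≥ δ'`. -/
theorem exists_choice_function_of_large_u3 (ε : ℝ) (hε : 0 < ε) :
    ∃ δ δ' : ℝ, 0 < δ ∧ 0 < δ' ∧
      ∀ (n : ℕ) (f : (Fin n → ZMod 2) → ℝ), (∀ x, f x = 1 ∨ f x = -1) →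
        ε ≤ gowersNorm 3 f →
        ∃ φ : (Fin n → ZMod 2) → (Fin n → ZMod 2),
          δ' ≤ ((univ.filter fun y : Fin n → ZMod 2 =>
              δ ≤ |fCoeff (dderiv f y) (φ y)|).card : ℝ) / 2 ^ n := by
  refine ⟨Real.sqrt (ε ^ 8 / 2), ε ^ 8 / 2, Real.sqrt_pos.2 (by positivity), by positivity,
    fun n f hf hnorm => ?_⟩
  have hδsq : Real.sqrt (ε ^ 8 / 2) ^ 2 = ε ^ 8 / 2 := Real.sq_sqrt (by positivity)
  have h2n : (0 : ℝ) < 2 ^ n := by positivity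
  have hb : ∀ y x, dderiv f y x = 1 ∨ dderiv f y x = -1 := by
    intro y x
    rcases hf x with h1 | h1 <;> rcases hf (x + y) with h2 | h2 <;>
      simp [dderiv, h1, h2]
  have hpar : ∀ y, ∑ α, (fCoeff (dderiv f y) α) ^ 2 = 1 := by
    intro y
    rw [my_parseval]
    have : ∑ x, (dderiv f y x) ^ 2 = (2 : ℝ) ^ n := by
      rw [Finset.sum_congr rfl (fun x _ => show (dderiv f y x) ^ 2 = 1 by
        rcases hb y x with h | h <;> rw [h] <;> norm_num)]
      simp [Finset.card_univ]
    rw [this, div_self (ne_of_gt h2n)]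
  have hmax : ∀ y : Fin n → ZMod 2, ∃ β : Fin n → ZMod 2,
      ∀ α, |fCoeff (dderiv f y) α| ≤ |fCoeff (dderiv f y) β| := by
    intro y
    obtain ⟨β, -, hβ⟩ := Finset.exists_max_image Finset.univ
      (fun α => |fCoeff (dderiv f y) α|) ⟨0, Finset.mem_univ 0⟩
    exact ⟨β, fun α => hβ α (Finset.mem_univ α)⟩
  choose φ hφ using hmax
  refine ⟨φ, ?_⟩
  have hq : ∀ y, ∑ α, (fCoeff (dderiv f y) α) ^ 4
      ≤ (fCoeff (dderiv f y) (φ y)) ^ 2 := by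
    intro y
    have step : ∀ α, (fCoeff (dderiv f y) α) ^ 4
        ≤ (fCoeff (dderiv f y) (φ y)) ^ 2 * (fCoeff (dderiv f y) α) ^ 2 := by
      intro α
      have h1 : (fCoeff (dderiv f y) α) ^ 2 ≤ (fCoeff (dderiv f y) (φ y)) ^ 2 := by
        rw [← sq_abs (fCoeff (dderiv f y) α), ← sq_abs (fCoeff (dderiv f y) (φ y))]
        exact pow_le_pow_left₀ (abs_nonneg _) (hφ y α) 2
      calc (fCoeff (dderiv f y) α) ^ 4
          = (fCoeff (dderiv f y) α) ^ 2 * (fCoeff (dderiv f y) α) ^ 2 := by ring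
        _ ≤ (fCoeff (dderiv f y) (φ y)) ^ 2 * (fCoeff (dderiv f y) α) ^ 2 :=
            mul_le_mul_of_nonneg_right h1 (sq_nonneg _)
    calc ∑ α, (fCoeff (dderiv f y) α) ^ 4
        ≤ ∑ α, (fCoeff (dderiv f y) (φ y)) ^ 2 * (fCoeff (dderiv f y) α) ^ 2 :=
          Finset.sum_le_sum fun α _ => step α
      _ = (fCoeff (dderiv f y) (φ y)) ^ 2 * ∑ α, (fCoeff (dderiv f y) α) ^ 2 := by
          rw [Finset.mul_sum]
      _ = (fCoeff (dderiv f y) (φ y)) ^ 2 := by rw [hpar y, mul_one]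
  have hm1 : ∀ y, (fCoeff (dderiv f y) (φ y)) ^ 2 ≤ 1 := by
    intro y
    have := Finset.single_le_sum (f := fun α => (fCoeff (dderiv f y) α) ^ 2)
      (fun α _ => sq_nonneg _) (Finset.mem_univ (φ y))
    rwa [hpar y] at this
  have hgow : gowersPow 3 f = (∑ y, ∑ α, (fCoeff (dderiv f y) α) ^ 4) / 2 ^ n := by
    rw [my_gowers3]
    congr 1
    exact Finset.sum_congr rfl fun y _ => my_u2_eq _
  have hp0 : 0 ≤ gowersPow 3 f := by
    rw [hgow]
    apply div_nonneg _ h2n.le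
    exact Finset.sum_nonneg fun y _ => Finset.sum_nonneg fun α _ =>
      (even_two.mul_right 2).pow_nonneg _
  have heps : ε ^ 8 ≤ gowersPow 3 f := by
    rw [gowersNorm] at hnorm
    have h8 : ε ^ 8 ≤ (gowersPow 3 f ^ ((1 : ℝ) / 2 ^ 3)) ^ 8 :=
      pow_le_pow_left₀ hε.le hnorm 8
    have hid : (gowersPow 3 f ^ ((1 : ℝ) / 2 ^ 3)) ^ 8 = gowersPow 3 f := by
      rw [← Real.rpow_natCast (gowersPow 3 f ^ ((1 : ℝ) / 2 ^ 3)) 8,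
        ← Real.rpow_mul hp0]
      norm_num
    rwa [hid] at h8
  have hsum : ε ^ 8 * 2 ^ n ≤ ∑ y, (fCoeff (dderiv f y) (φ y)) ^ 2 := by
    have hle : gowersPow 3 f ≤ (∑ y, (fCoeff (dderiv f y) (φ y)) ^ 2) / 2 ^ n := by
      rw [hgow]
      exact (div_le_div_iff_of_pos_right h2n).mpr (Finset.sum_le_sum fun y _ => hq y)
    have h := heps.trans hle
    rwa [le_div_iff₀ h2n] at h
  set A := (univ.filter fun y : Fin n → ZMod 2 =>
    Real.sqrt (ε ^ 8 / 2) ≤ |fCoeff (dderiv f y) (φ y)|) with hA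
  have hsplit : ∑ y, (fCoeff (dderiv f y) (φ y)) ^ 2
      ≤ (A.card : ℝ) + 2 ^ n * (ε ^ 8 / 2) := by
    rw [← Finset.sum_filter_add_sum_filter_not univ
      (fun y => Real.sqrt (ε ^ 8 / 2) ≤ |fCoeff (dderiv f y) (φ y)|)
      (fun y => (fCoeff (dderiv f y) (φ y)) ^ 2)]
    have h1 : ∑ y ∈ A, (fCoeff (dderiv f y) (φ y)) ^ 2 ≤ (A.card : ℝ) := by
      calc ∑ y ∈ A, (fCoeff (dderiv f y) (φ y)) ^ 2 ≤ ∑ y ∈ A, 1 :=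
            Finset.sum_le_sum fun y _ => hm1 y
        _ = (A.card : ℝ) := by simp
    have h2 : ∑ y ∈ (univ.filter fun y =>
          ¬ Real.sqrt (ε ^ 8 / 2) ≤ |fCoeff (dderiv f y) (φ y)|),
          (fCoeff (dderiv f y) (φ y)) ^ 2 ≤ 2 ^ n * (ε ^ 8 / 2) := by
      have hbd : ∀ y ∈ (univ.filter fun y =>
          ¬ Real.sqrt (ε ^ 8 / 2) ≤ |fCoeff (dderiv f y) (φ y)|),
          (fCoeff (dderiv f y) (φ y)) ^ 2 ≤ ε ^ 8 / 2 := by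
        intro y hy
        rw [Finset.mem_filter] at hy
        have habs : |fCoeff (dderiv f y) (φ y)| ≤ Real.sqrt (ε ^ 8 / 2) :=
          le_of_not_ge hy.2
        have h3 : (fCoeff (dderiv f y) (φ y)) ^ 2 ≤ Real.sqrt (ε ^ 8 / 2) ^ 2 := by
          rw [← sq_abs]
          exact pow_le_pow_left₀ (abs_nonneg _) habs 2
        rwa [hδsq] at h3
      calc ∑ y ∈ (univ.filter fun y =>
            ¬ Real.sqrt (ε ^ 8 / 2) ≤ |fCoeff (dderiv f y) (φ y)|),
            (fCoeff (dderiv f y) (φ y)) ^ 2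
          ≤ ∑ y ∈ (univ.filter fun y =>
            ¬ Real.sqrt (ε ^ 8 / 2) ≤ |fCoeff (dderiv f y) (φ y)|), (ε ^ 8 / 2) :=
            Finset.sum_le_sum hbd
        _ = ((univ.filter fun y : Fin n → ZMod 2 =>
              ¬ Real.sqrt (ε ^ 8 / 2) ≤ |fCoeff (dderiv f y) (φ y)|).card : ℝ)
              * (ε ^ 8 / 2) := by rw [Finset.sum_const, nsmul_eq_mul]
        _ ≤ 2 ^ n * (ε ^ 8 / 2) := by
            refine mul_le_mul_of_nonneg_right ?_ (by positivity)
            calc ((univ.filter fun y : Fin n → ZMod 2 =>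
                  ¬ Real.sqrt (ε ^ 8 / 2) ≤ |fCoeff (dderiv f y) (φ y)|).card : ℝ)
                ≤ (Fintype.card (Fin n → ZMod 2) : ℝ) :=
                  Nat.cast_le.2 (Finset.card_filter_le _ _)
              _ = 2 ^ n := by simp [Fintype.card_fun]
    linarith [h1, h2]
  rw [le_div_iff₀ h2n]
  linarith [hsum.trans hsplit]
end

section
/- For any boolean function f : F_2^n → {-1,1}, the weak linearity identity holds: E_{x,y} Σ_{α,β} f̂_x^2(α) f̂_y^2(β) f̂_{x+y}^2(α+β) = E_y Σ_α f̂_y^6(α). -/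
open Finset

/-!
Write `A_x(t) = E_z f_x(z) f_x(z + t)` for the autocorrelation of the derivative `f_x`. Then
`f̂_x² = Â_x`, and `A_x(t) = A_t(x)` because both equal `E_z f(z) f(z+x) f(z+t) f(z+x+t)`.
Fourier inversion turns the left side into `E_{x,y} E_t A_x(t) A_y(t) A_{x+y}(t)`. Exchanging the
roles of `t` and `(x, y)` gives `E_t E_{x,y} A_t(x) A_t(y) A_t(x+y) = E_t Σ_s Â_t(s)³`, and
`Â_t³ = f̂_t⁶`.
-/

namespace BooleanFourier

variable {n : ℕ}

theorem add_eq_zero_iff_eq {x y : Fin n → ZMod 2} : x + y = 0 ↔ x = y := by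
  simp only [funext_iff, Pi.add_apply, Pi.zero_apply, CharTwo.add_eq_zero]

theorem add_add_cancel_left (x y : Fin n → ZMod 2) : x + (x + y) = y := by
  rw [← add_assoc, add_eq_zero_iff_eq.2 rfl, zero_add]

theorem neg_one_pow_val_add (a b : ZMod 2) :
    (-1 : ℝ) ^ (a + b).val = (-1) ^ a.val * (-1) ^ b.val := by
  rw [ZMod.val_add, ← neg_one_pow_eq_pow_mod_two, pow_add]

theorem chi_add_right (α x y : Fin n → ZMod 2) : chi α (x + y) = chi α x * chi α y := by
  simp only [chi, Pi.add_apply, mul_add, sum_add_distrib, neg_one_pow_val_add]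

theorem chi_comm (α x : Fin n → ZMod 2) : chi α x = chi x α := by
  simp only [chi, mul_comm]

theorem chi_add_left (α β x : Fin n → ZMod 2) : chi (α + β) x = chi α x * chi β x := by
  rw [chi_comm, chi_add_right, chi_comm x, chi_comm x]

theorem sum_chi_eq_ite (v : Fin n → ZMod 2) :
    ∑ α, chi α v = if v = 0 then 2 ^ n else 0 := by
  split_ifs with hv
  · simp [hv, chi]
  obtain ⟨i, hi⟩ := Function.ne_iff.1 hv
  have hval : (v i).val = 1 := by
    have := ZMod.val_lt (v i); have := (ZMod.val_ne_zero (v i)).2 hi; omega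
  refine eq_zero_of_mul_eq_self_left (b := chi (Pi.single i 1) v) ?_ ?_
  · norm_num [chi, Pi.single_apply, hval]
  · rw [mul_sum]
    exact Fintype.sum_equiv (Equiv.addLeft _) _ _ fun α => (chi_add_left _ _ _).symm

theorem sum_fCoeff_mul_chi (u : (Fin n → ZMod 2) → ℝ) (t : Fin n → ZMod 2) :
    ∑ α, fCoeff u α * chi α t = u t := by
  simp only [fCoeff, div_mul_eq_mul_div, ← sum_div, sum_mul]
  rw [sum_comm]
  simp only [mul_assoc, ← chi_add_right, ← mul_sum, sum_chi_eq_ite, add_eq_zero_iff_eq,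
    mul_ite, mul_zero, sum_ite_eq', mem_univ, if_true]
  field_simp

noncomputable def corr (u v : (Fin n → ZMod 2) → ℝ) (t : Fin n → ZMod 2) : ℝ :=
  (∑ x, u x * v (x + t)) / 2 ^ n

theorem fCoeff_mul_fCoeff (u v : (Fin n → ZMod 2) → ℝ) (α : Fin n → ZMod 2) :
    fCoeff u α * fCoeff v α = fCoeff (corr u v) α := by
  have hnum : ∑ t, (∑ x, u x * v (x + t)) * chi α t =
      (∑ x, u x * chi α x) * (∑ y, v y * chi α y) := by
    simp only [sum_mul]
    rw [sum_comm]
    refine sum_congr rfl fun x _ => ?_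
    rw [← Equiv.sum_comp (Equiv.addLeft x)]
    simp only [Equiv.coe_addLeft, add_add_cancel_left, chi_add_right, mul_sum]
    exact sum_congr rfl fun y _ => by ring
  simp only [fCoeff, corr, div_mul_eq_mul_div, ← sum_div, hnum]
  ring

theorem sum_sum_fCoeff_mul_fCoeff_mul_fCoeff_add (u v w : (Fin n → ZMod 2) → ℝ) :
    ∑ α, ∑ β, fCoeff u α * fCoeff v β * fCoeff w (α + β) = (∑ t, u t * v t * w t) / 2 ^ n := by
  calc ∑ α, ∑ β, fCoeff u α * fCoeff v β * fCoeff w (α + β)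
      = ∑ α, ∑ β, ∑ t, fCoeff u α * chi α t * (fCoeff v β * chi β t) * w t / 2 ^ n := by
        simp only [fCoeff.eq_1 w, chi_add_left, mul_sum, sum_div]
        exact sum_congr rfl fun α _ => sum_congr rfl fun β _ =>
          sum_congr rfl fun t _ => by ring
    _ = ∑ t, (∑ α, fCoeff u α * chi α t) * (∑ β, fCoeff v β * chi β t) * w t / 2 ^ n := by
        rw [sum_comm_cycle]
        simp only [sum_mul_sum]
        simp only [sum_mul, sum_div]
    _ = (∑ t, u t * v t * w t) / 2 ^ n := by
        simp only [sum_fCoeff_mul_chi, sum_div]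

theorem sum_fCoeff_mul_fCoeff_mul_fCoeff (u v w : (Fin n → ZMod 2) → ℝ) :
    ∑ α, fCoeff u α * fCoeff v α * fCoeff w α =
      (∑ x, ∑ y, u x * v y * w (x + y)) / (2 ^ n) ^ 2 := by
  calc ∑ α, fCoeff u α * fCoeff v α * fCoeff w α
      = ∑ x, ∑ y, ∑ α, u x * v y * (fCoeff w α * chi α (x + y)) / (2 ^ n) ^ 2 := by
        rw [sum_comm_cycle]
        refine sum_congr rfl fun α _ => ?_
        rw [fCoeff.eq_1 u, fCoeff.eq_1 v, div_mul_div_comm, sum_mul_sum]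
        simp only [sum_mul, sum_div, chi_add_right, sq]
        exact sum_congr rfl fun x _ => sum_congr rfl fun y _ => by ring
    _ = (∑ x, ∑ y, u x * v y * w (x + y)) / (2 ^ n) ^ 2 := by
        simp only [← mul_sum, ← sum_div, sum_fCoeff_mul_chi]

theorem corr_dderiv_comm (f : (Fin n → ZMod 2) → ℝ) (x t : Fin n → ZMod 2) :
    corr (dderiv f x) (dderiv f x) t = corr (dderiv f t) (dderiv f t) x := by
  unfold corr dderiv
  congr 1
  refine sum_congr rfl fun z _ => ?_
  rw [add_right_comm z t x]
  ring

end BooleanFourier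

open BooleanFourier in
theorem weak_linearity_identity_general {n : ℕ} (f : (Fin n → ZMod 2) → ℝ) :
    (∑ x : Fin n → ZMod 2, ∑ y : Fin n → ZMod 2, ∑ α : Fin n → ZMod 2, ∑ β : Fin n → ZMod 2,
        fCoeff (dderiv f x) α ^ 2 * fCoeff (dderiv f y) β ^ 2 *
          fCoeff (dderiv f (x + y)) (α + β) ^ 2) / ((2 : ℝ) ^ n) ^ 2 =
      (∑ y : Fin n → ZMod 2, ∑ α : Fin n → ZMod 2, fCoeff (dderiv f y) α ^ 6) / 2 ^ n := by
  set A := fun x => corr (dderiv f x) (dderiv f x)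
  have hsq (x α) : fCoeff (dderiv f x) α ^ 2 = fCoeff (A x) α := by rw [sq, fCoeff_mul_fCoeff]
  have hsum : ∑ x, ∑ y, ∑ α, ∑ β, fCoeff (dderiv f x) α ^ 2 * fCoeff (dderiv f y) β ^ 2 *
      fCoeff (dderiv f (x + y)) (α + β) ^ 2 = 2 ^ n * ∑ t, ∑ s, fCoeff (dderiv f t) s ^ 6 :=
    calc _ = ∑ x, ∑ y, (∑ t, A x t * A y t * A (x + y) t) / 2 ^ n := by
          simp only [hsq, sum_sum_fCoeff_mul_fCoeff_mul_fCoeff_add]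
      _ = ∑ t, (∑ x, ∑ y, A t x * A t y * A t (x + y)) / 2 ^ n := by
          simp only [sum_div]
          rw [sum_comm_cycle]
          refine sum_congr rfl fun t _ => sum_congr rfl fun x _ =>
            sum_congr rfl fun y _ => ?_
          simp only [A, corr_dderiv_comm f _ t]
      _ = ∑ t, 2 ^ n * ∑ s, fCoeff (A t) s ^ 3 := by
          simp only [pow_three, ← mul_assoc, sum_fCoeff_mul_fCoeff_mul_fCoeff]
          refine sum_congr rfl fun t _ => ?_
          field_simp
      _ = 2 ^ n * ∑ t, ∑ s, fCoeff (dderiv f t) s ^ 6 := by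
          simp only [← hsq, ← pow_mul, mul_sum]
  rw [hsum]
  field_simp

/-- Weak linearity identity:
`E_{x,y} Σ_{α,β} f̂_x²(α) f̂_y²(β) f̂_{x+y}²(α+β) = E_y Σ_α f̂_y⁶(α)`. -/
theorem weak_linearity_identity {n : ℕ} (f : (Fin n → ZMod 2) → ℝ)
    (hf : ∀ x, f x = 1 ∨ f x = -1) :
    (∑ x : Fin n → ZMod 2, ∑ y : Fin n → ZMod 2, ∑ α : Fin n → ZMod 2, ∑ β : Fin n → ZMod 2,
        fCoeff (dderiv f x) α ^ 2 * fCoeff (dderiv f y) β ^ 2 *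
          fCoeff (dderiv f (x + y)) (α + β) ^ 2) / ((2 : ℝ) ^ n) ^ 2 =
      (∑ y : Fin n → ZMod 2, ∑ α : Fin n → ZMod 2, fCoeff (dderiv f y) α ^ 6) / 2 ^ n :=
  weak_linearity_identity_general f
end

section
/- Cauchy–Schwarz step for generalized averages: let A be a full-rank t×T matrix over F_2 and v a minimal nonzero vector in the row space of A (i.e., the complement of its support indexes a hyperplane). Let B be the t×|supp(v)| submatrix of columns in supp(v), and A' the (t+1)×2|supp(v)| matrix [B B; 1...1 0...0]. Then for every boolean function f : F_2^n → {-1,1}, E_A(f) ≤ (E_{A'}(f))^{1/2}. -/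
open Finset

/-- Generalized average of `f` associated with a binary matrix `A`:
`E_A(f) = E_{y_1,…,y_t} ∏_j f(Σ_{i : A_{ij} = 1} y_i)`. -/
noncomputable def genAvg {n : ℕ} {ι κ : Type*} [Fintype ι] [DecidableEq ι] [Fintype κ]
    (A : Matrix ι κ (ZMod 2)) (f : (Fin n → ZMod 2) → ℝ) : ℝ :=
  (∑ y : ι → Fin n → ZMod 2, ∏ j, f (∑ i, A i j • y i)) / ((2 : ℝ) ^ n) ^ Fintype.card ι


lemma zmod2_add_self (a : ZMod 2) : a + a = 0 := by revert a; decide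

lemma zmod2_ne_zero (a : ZMod 2) (h : a ≠ 0) : a = 1 := by revert a; decide

lemma sum_split_at {M : Type*} [AddCommMonoid M] {t : ℕ} (i0 : Fin t) (h : Fin t → M) :
    ∑ i, h i = h i0 + ∑ i : {j : Fin t // j ≠ i0}, h i.1 := by
  classical
  rw [← Finset.sum_subtype (Finset.univ.erase i0) (fun x => by simp) h,
    Finset.add_sum_erase _ h (Finset.mem_univ i0)]

set_option maxHeartbeats 2000000

open scoped Classical in
/-- Cauchy–Schwarz step for generalized averages: if `v` is a minimal nonzero vector in the
row space of the full-rank matrix `A`, and `A' = [B B ; 1…1 0…0]` where `B` consists of the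
columns of `A` in the support of `v`, then `E_A(f) ≤ (E_{A'}(f))^{1/2}`. -/
theorem genAvg_cauchy_schwarz_step {n t T : ℕ} (f : (Fin n → ZMod 2) → ℝ)
    (hf : ∀ x, f x = 1 ∨ f x = -1)
    (A : Matrix (Fin t) (Fin T) (ZMod 2)) (hrank : A.rank = t)
    (v : Fin T → ZMod 2)
    (hv : v ∈ Submodule.span (ZMod 2) (Set.range fun i => A i))
    (hv0 : v ≠ 0)
    (hmin : ∀ w ∈ Submodule.span (ZMod 2) (Set.range fun i => A i),
      w ≠ 0 → {j | w j ≠ 0} ⊆ {j | v j ≠ 0} → w = v)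
    (A' : Matrix (Fin t ⊕ Unit) ({j : Fin T // v j = 1} ⊕ {j : Fin T // v j = 1}) (ZMod 2))
    (h1 : ∀ i j, A' (Sum.inl i) (Sum.inl j) = A i j.1)
    (h2 : ∀ i j, A' (Sum.inl i) (Sum.inr j) = A i j.1)
    (h3 : ∀ u j, A' (Sum.inr u) (Sum.inl j) = 1)
    (h4 : ∀ u j, A' (Sum.inr u) (Sum.inr j) = 0) :
    genAvg A f ≤ Real.sqrt (genAvg A' f) := by
  classical
  -- the coefficient vector
  obtain ⟨u, hu⟩ := (Submodule.mem_span_range_iff_exists_fun (ZMod 2)).mp hv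
  have hu' : ∀ j, ∑ i, u i * A i j = v j := by
    intro j
    have := congrFun hu j
    simpa using this
  have hex : ∃ i0, u i0 = 1 := by
    by_contra h
    push_neg at h
    apply hv0
    rw [← hu]
    funext j
    simp only [Finset.sum_apply, Pi.zero_apply]
    apply Finset.sum_eq_zero
    intro i _
    have : u i = 0 := by
      rcases eq_or_ne (u i) 0 with h0 | h0
      · exact h0
      · exact absurd (zmod2_ne_zero _ h0) (h i)
    simp [this]
  obtain ⟨i0, hi0⟩ := hex
  have ht : 1 ≤ t := i0.pos
  -- the involution ψ
  have hVzz : ∀ x : (Fin n → ZMod 2), x + x = 0 := by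
    intro x; funext k; exact zmod2_add_self (x k)
  set u' : Fin t → ZMod 2 := fun i => if i = i0 then 0 else u i with hu'def
  set ψ : (Fin t → (Fin n → ZMod 2)) → (Fin t → (Fin n → ZMod 2)) := fun y i => y i + u' i • y i0 with hψdef
  have hψi0 : ∀ y, ψ y i0 = y i0 := by
    intro y; simp [hψdef, hu'def]
  have hψ : Function.Involutive ψ := by
    intro y; funext i
    have h1 : ψ (ψ y) i = ψ y i + u' i • ψ y i0 := rfl
    rw [h1, hψi0]
    show y i + u' i • y i0 + u' i • y i0 = y i
    rw [add_assoc, ← add_smul, zmod2_add_self, zero_smul, add_zero]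
  set B : Matrix (Fin t) (Fin T) (ZMod 2) := fun i j => if i = i0 then v j else A i j with hBdef
  have hL : ∀ (y : Fin t → (Fin n → ZMod 2)) j, ∑ i, A i j • ψ y i = ∑ i, B i j • y i := by
    intro y j
    rw [sum_split_at i0 (fun i => A i j • ψ y i), sum_split_at i0 (fun i => B i j • y i)]
    have e1 : ∀ i : {i : Fin t // i ≠ i0},
        A i.1 j • ψ y i.1 = A i.1 j • y i.1 + (A i.1 j * u i.1) • y i0 := by
      intro i
      rw [hψdef]; simp only
      rw [hu'def]; simp only [if_neg i.2]
      rw [smul_add, smul_smul]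
    have e2 : ∀ i : {i : Fin t // i ≠ i0}, B i.1 j • y i.1 = A i.1 j • y i.1 := by
      intro i; rw [hBdef]; simp [i.2]
    rw [Finset.sum_congr rfl (fun i _ => e1 i), Finset.sum_congr rfl (fun i _ => e2 i),
      Finset.sum_add_distrib, ← Finset.sum_smul, hψi0]
    have hB0 : B i0 j = v j := by rw [hBdef]; simp
    rw [hB0]
    have hcoef : A i0 j + ∑ i : {i : Fin t // i ≠ i0}, A i.1 j * u i.1 = v j := by
      have h := hu' j
      rw [sum_split_at i0 (fun i => u i * A i j), hi0, one_mul] at h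
      rw [← h]
      congr 1
      exact Finset.sum_congr rfl fun i _ => mul_comm _ _
    rw [← hcoef, add_smul]
    abel
  -- split equiv at i0
  set e := Equiv.funSplitAt i0 (Fin n → ZMod 2) with hedef
  set m : ({i : Fin t // i ≠ i0} → (Fin n → ZMod 2)) → Fin T → (Fin n → ZMod 2) :=
    fun y' j => ∑ i : {i : Fin t // i ≠ i0}, A i.1 j • y' i with hmdef
  have key1 : ∀ (z : (Fin n → ZMod 2)) (y' : {i : Fin t // i ≠ i0} → (Fin n → ZMod 2)) (j : Fin T),
      ∑ i, B i j • (e.symm (z, y')) i = v j • z + m y' j := by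
    intro z y' j
    rw [sum_split_at i0 (fun i => B i j • (e.symm (z, y')) i)]
    congr 1
    · have hz : e.symm (z, y') i0 = z := by simp [hedef]
      have hB : B i0 j = v j := by simp [hBdef]
      rw [hz, hB]
    · apply Finset.sum_congr rfl
      intro i _
      have hyi : e.symm (z, y') i.1 = y' i := by simp [hedef, i.2]
      have hB : B i.1 j = A i.1 j := by simp [hBdef, i.2]
      rw [hyi, hB]
  set g : ({i : Fin t // i ≠ i0} → (Fin n → ZMod 2)) → ℝ :=
    fun y' => ∑ z : (Fin n → ZMod 2), ∏ j : {j : Fin T // v j = 1}, f (z + m y' j.1) with hgdef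
  set H : ({i : Fin t // i ≠ i0} → (Fin n → ZMod 2)) → ℝ :=
    fun y' => ∏ j : {j : Fin T // ¬ v j = 1}, f (m y' j.1) with hHdef
  have prodsplit : ∀ (z : (Fin n → ZMod 2)) (y' : {i : Fin t // i ≠ i0} → (Fin n → ZMod 2)),
      (∏ j, f (v j • z + m y' j))
        = H y' * (∏ j : {j : Fin T // v j = 1}, f (z + m y' j.1)) := by
    intro z y'
    rw [← Fintype.prod_subtype_mul_prod_subtype (fun j => v j = 1)
      (fun j => f (v j • z + m y' j)), mul_comm]
    congr 1
    · apply Finset.prod_congr rfl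
      intro j _
      have h0 : v j.1 = 0 := by
        rcases eq_or_ne (v j.1) 0 with h0 | h0
        · exact h0
        · exact absurd (zmod2_ne_zero _ h0) j.2
      rw [h0, zero_smul, zero_add]
    · apply Finset.prod_congr rfl
      intro j _
      rw [j.2, one_smul]
  have step2 : ∑ y : Fin t → (Fin n → ZMod 2), ∏ j, f (∑ i, B i j • y i)
      = ∑ y' : {i : Fin t // i ≠ i0} → (Fin n → ZMod 2), H y' * g y' := by
    rw [← Equiv.sum_comp e.symm (fun y => ∏ j, f (∑ i, B i j • y i)),
      Fintype.sum_prod_type, Finset.sum_comm]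
    apply Finset.sum_congr rfl
    intro y' _
    rw [hgdef]
    simp only
    rw [Finset.mul_sum]
    apply Finset.sum_congr rfl
    intro z _
    have hk : ∀ j : Fin T, f (∑ i, B i j • (e.symm (z, y')) i) = f (v j • z + m y' j) :=
      fun j => by rw [key1]
    rw [Finset.prod_congr rfl fun j _ => hk j, prodsplit z y']
  have habsf : ∀ x, |f x| = 1 := by
    intro x; rcases hf x with h | h <;> simp [h]
  have hH : ∀ y', H y' * g y' ≤ |g y'| := by
    intro y'
    have habs : |H y'| = 1 := by
      rw [hHdef]
      simp only
      rw [Finset.abs_prod]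
      exact Finset.prod_eq_one fun j _ => habsf _
    calc H y' * g y' ≤ |H y' * g y'| := le_abs_self _
      _ = |g y'| := by rw [abs_mul, habs, one_mul]
  have hCS : ∑ y' : {i : Fin t // i ≠ i0} → (Fin n → ZMod 2), |g y'|
      ≤ Real.sqrt ((Fintype.card ({i : Fin t // i ≠ i0} → (Fin n → ZMod 2)) : ℝ) * ∑ y', g y' ^ 2) := by
    rw [Real.le_sqrt (Finset.sum_nonneg fun _ _ => abs_nonneg _)
      (by positivity)]
    have h := sq_sum_le_card_mul_sum_sq (s := (Finset.univ : Finset ({i : Fin t // i ≠ i0} → (Fin n → ZMod 2))))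
      (f := fun y' => |g y'|)
    simp only [sq_abs, Finset.card_univ] at h
    exact h
  -- the A' side
  set e3 : ((Fin t → (Fin n → ZMod 2)) × (Fin n → ZMod 2)) ≃ ((Fin t ⊕ Unit) → (Fin n → ZMod 2)) :=
    ((Equiv.refl (Fin t → (Fin n → ZMod 2))).prodCongr
      (Equiv.funUnique Unit (Fin n → ZMod 2)).symm).trans
      (Equiv.sumArrowEquivProdArrow (Fin t) Unit (Fin n → ZMod 2)).symm with he3def
  have e3app : ∀ (y : Fin t → (Fin n → ZMod 2)) (w : Fin n → ZMod 2),
      e3 (y, w) = Sum.elim y (fun _ => w) := fun y w => rfl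
  have hform1 : ∀ (y : Fin t → (Fin n → ZMod 2)) (w : Fin n → ZMod 2) (j : {j : Fin T // v j = 1}),
      ∑ I, A' I (Sum.inl j) • (Sum.elim y fun _ => w) I = (∑ i, A i j.1 • y i) + w := by
    intro y w j
    rw [Fintype.sum_sum_type]
    simp [h1, h3]
  have hform2 : ∀ (y : Fin t → (Fin n → ZMod 2)) (w : Fin n → ZMod 2) (j : {j : Fin T // v j = 1}),
      ∑ I, A' I (Sum.inr j) • (Sum.elim y fun _ => w) I = ∑ i, A i j.1 • y i := by
    intro y w j
    rw [Fintype.sum_sum_type]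
    simp [h2, h4]
  have step5 : (∑ Y : (Fin t ⊕ Unit) → (Fin n → ZMod 2),
        ∏ J : {j : Fin T // v j = 1} ⊕ {j : Fin T // v j = 1}, f (∑ I, A' I J • Y I))
      = ∑ y' : {i : Fin t // i ≠ i0} → (Fin n → ZMod 2), g y' ^ 2 := by
    calc (∑ Y : (Fin t ⊕ Unit) → (Fin n → ZMod 2),
        ∏ J : {j : Fin T // v j = 1} ⊕ {j : Fin T // v j = 1}, f (∑ I, A' I J • Y I))
        = ∑ p : (Fin t → (Fin n → ZMod 2)) × (Fin n → ZMod 2),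
            ∏ J : {j : Fin T // v j = 1} ⊕ {j : Fin T // v j = 1}, f (∑ I, A' I J • (e3 p) I) :=
          (Equiv.sum_comp e3 _).symm
      _ = ∑ y : Fin t → (Fin n → ZMod 2), ∑ w : Fin n → ZMod 2,
            (∏ j : {j : Fin T // v j = 1}, f ((∑ i, A i j.1 • y i) + w))
              * (∏ j : {j : Fin T // v j = 1}, f (∑ i, A i j.1 • y i)) := by
          rw [Fintype.sum_prod_type]
          refine Finset.sum_congr rfl fun y _ => Finset.sum_congr rfl fun w _ => ?_
          rw [e3app, Fintype.prod_sum_type]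
          congr 1
          · exact Finset.prod_congr rfl fun j _ => by rw [hform1]
          · exact Finset.prod_congr rfl fun j _ => by rw [hform2]
      _ = ∑ y : Fin t → (Fin n → ZMod 2), ∑ w : Fin n → ZMod 2,
            (∏ j : {j : Fin T // v j = 1}, f ((∑ i, B i j.1 • y i) + w))
              * (∏ j : {j : Fin T // v j = 1}, f (∑ i, B i j.1 • y i)) := by
          rw [← Equiv.sum_comp (hψ.toPerm ψ) (fun y => ∑ w : Fin n → ZMod 2,
            (∏ j : {j : Fin T // v j = 1}, f ((∑ i, A i j.1 • y i) + w))
              * (∏ j : {j : Fin T // v j = 1}, f (∑ i, A i j.1 • y i)))]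
          refine Finset.sum_congr rfl fun y _ => ?_
          simp only [Function.Involutive.coe_toPerm, hL]
      _ = ∑ z : Fin n → ZMod 2, ∑ y' : {i : Fin t // i ≠ i0} → (Fin n → ZMod 2),
            ∑ w : Fin n → ZMod 2,
            (∏ j : {j : Fin T // v j = 1}, f ((z + m y' j.1) + w))
              * (∏ j : {j : Fin T // v j = 1}, f (z + m y' j.1)) := by
          rw [← Equiv.sum_comp e.symm (fun y => ∑ w : Fin n → ZMod 2,
            (∏ j : {j : Fin T // v j = 1}, f ((∑ i, B i j.1 • y i) + w))
              * (∏ j : {j : Fin T // v j = 1}, f (∑ i, B i j.1 • y i))),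
            Fintype.sum_prod_type]
          refine Finset.sum_congr rfl fun z _ => Finset.sum_congr rfl fun y' _ =>
            Finset.sum_congr rfl fun w _ => ?_
          have hk : ∀ j : {j : Fin T // v j = 1},
              (∑ i, B i j.1 • (e.symm (z, y')) i) = z + m y' j.1 := fun j => by
            rw [key1, j.2, one_smul]
          congr 1
          · exact Finset.prod_congr rfl fun j _ => by rw [hk]
          · exact Finset.prod_congr rfl fun j _ => by rw [hk]
      _ = ∑ z : Fin n → ZMod 2, ∑ y' : {i : Fin t // i ≠ i0} → (Fin n → ZMod 2),
            (∑ w : Fin n → ZMod 2, ∏ j : {j : Fin T // v j = 1}, f (w + m y' j.1))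
              * (∏ j : {j : Fin T // v j = 1}, f (z + m y' j.1)) := by
          refine Finset.sum_congr rfl fun z _ => Finset.sum_congr rfl fun y' _ => ?_
          rw [← Finset.sum_mul]
          congr 1
          rw [← Equiv.sum_comp (Equiv.addLeft z)
            (fun w => ∏ j : {j : Fin T // v j = 1}, f (w + m y' j.1))]
          refine Finset.sum_congr rfl fun w _ => Finset.prod_congr rfl fun j _ => ?_
          congr 1
          simp only [Equiv.coe_addLeft]
          abel
      _ = ∑ y' : {i : Fin t // i ≠ i0} → (Fin n → ZMod 2), g y' ^ 2 := by
          rw [Finset.sum_comm]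
          refine Finset.sum_congr rfl fun y' _ => ?_
          rw [← Finset.mul_sum, hgdef]
          simp only
          rw [pow_two]
  -- cardinalities
  have hcard1 : (Fintype.card ({i : Fin t // i ≠ i0} → (Fin n → ZMod 2)) : ℝ)
      = ((2:ℝ) ^ n) ^ (t - 1) := by
    have h1' : Fintype.card {i : Fin t // i ≠ i0} = t - 1 := by
      simp [Fintype.card_subtype_compl]
    rw [Fintype.card_fun, h1']
    have : Fintype.card (Fin n → ZMod 2) = 2 ^ n := by
      rw [Fintype.card_fun, ZMod.card, Fintype.card_fin]
    rw [this]
    push_cast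
    ring
  have hD : (0:ℝ) ≤ ∑ y' : {i : Fin t // i ≠ i0} → (Fin n → ZMod 2), g y' ^ 2 :=
    Finset.sum_nonneg fun _ _ => sq_nonneg _
  have hnumA : (∑ y : Fin t → (Fin n → ZMod 2), ∏ j, f (∑ i, A i j • y i))
      = ∑ y : Fin t → (Fin n → ZMod 2), ∏ j, f (∑ i, B i j • y i) := by
    rw [← Equiv.sum_comp (hψ.toPerm ψ) (fun y => ∏ j, f (∑ i, A i j • y i))]
    refine Finset.sum_congr rfl fun y _ => ?_
    simp only [Function.Involutive.coe_toPerm, hL]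
  have hle : (∑ y : Fin t → (Fin n → ZMod 2), ∏ j, f (∑ i, A i j • y i))
      ≤ Real.sqrt (((2:ℝ)^n) ^ (t-1) * ∑ y' : {i : Fin t // i ≠ i0} → (Fin n → ZMod 2), g y' ^ 2) := by
    rw [hnumA, step2]
    refine le_trans (Finset.sum_le_sum fun y' _ => hH y') (le_trans hCS (le_of_eq ?_))
    rw [hcard1]
  have harith : Real.sqrt (((2:ℝ)^n)^(t-1) * ∑ y' : {i : Fin t // i ≠ i0} → (Fin n → ZMod 2), g y'^2) / ((2:ℝ)^n)^t
      = Real.sqrt ((∑ y' : {i : Fin t // i ≠ i0} → (Fin n → ZMod 2), g y'^2) / ((2:ℝ)^n)^(t+1)) := by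
    have hnn : (0:ℝ) ≤ ((2:ℝ)^n)^(t-1) * ∑ y' : {i : Fin t // i ≠ i0} → (Fin n → ZMod 2), g y'^2 :=
      mul_nonneg (by positivity) hD
    have hfrac : ((2:ℝ)^n)^(t-1) * (∑ y' : {i : Fin t // i ≠ i0} → (Fin n → ZMod 2), g y'^2) / (((2:ℝ)^n)^t)^2
        = (∑ y' : {i : Fin t // i ≠ i0} → (Fin n → ZMod 2), g y'^2) / ((2:ℝ)^n)^(t+1) := by
      rw [div_eq_div_iff (by positivity) (by positivity)]
      rw [show (((2:ℝ)^n)^t)^2 = ((2:ℝ)^n)^(2*t) by rw [← pow_mul, mul_comm]]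
      rw [mul_right_comm, ← pow_add, show t - 1 + (t+1) = 2*t by omega]
      ring
    calc Real.sqrt (((2:ℝ)^n)^(t-1) * ∑ y' : {i : Fin t // i ≠ i0} → (Fin n → ZMod 2), g y'^2) / ((2:ℝ)^n)^t
        = Real.sqrt (((2:ℝ)^n)^(t-1) * ∑ y' : {i : Fin t // i ≠ i0} → (Fin n → ZMod 2), g y'^2) / Real.sqrt ((((2:ℝ)^n)^t)^2) := by
          rw [Real.sqrt_sq (by positivity)]
      _ = Real.sqrt ((((2:ℝ)^n)^(t-1) * ∑ y' : {i : Fin t // i ≠ i0} → (Fin n → ZMod 2), g y'^2) / (((2:ℝ)^n)^t)^2) := by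
          rw [Real.sqrt_div hnn]
      _ = _ := by rw [hfrac]
  -- final assembly
  simp only [genAvg, Fintype.card_fin, Fintype.card_sum, Fintype.card_unit]
  rw [step5]
  calc (∑ y : Fin t → (Fin n → ZMod 2), ∏ j, f (∑ i, A i j • y i)) / ((2:ℝ)^n)^t
      ≤ Real.sqrt (((2:ℝ)^n)^(t-1) * ∑ y' : {i : Fin t // i ≠ i0} → (Fin n → ZMod 2), g y'^2) / ((2:ℝ)^n)^t := by
        gcongr
    _ = Real.sqrt ((∑ y' : {i : Fin t // i ≠ i0} → (Fin n → ZMod 2), g y'^2) / ((2:ℝ)^n)^(t+1)) := harith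
end
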